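/- Let q be a prime power, m,k,n positive integers, and let U be an F_q-subspace of F_{q^m}^k with dim_{F_q} U = n whose F_{q^m}-span is F_{q^m}^k. Then for every i ≥ 0, (q−1)·( C(k+i−1, i) − dim_{F_{q^m}} I(L_U)_i ) + 1 ≤ q^n; equivalently, n ≥ log_q((q−1)·h_i(C) + 1) for the code C of length n and dimension k with column space U. -/

import Mathlib

open MvPolynomial

/-- The `F_{q^m}`-space of homogeneous polynomials of degree `d` in `k` variables
vanishing at every point of `U`. -/
noncomputable def homogVanish (Fqm : Type) [Field Fqm] (k d : ℕ)
    (U : Set (Fin k → Fqm)) : Submodule Fqm (MvPolynomial (Fin k) Fqm) :=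
  homogeneousSubmodule (Fin k) Fqm d ⊓
    ⨅ u ∈ U, LinearMap.ker (aeval (R := Fqm) u).toLinearMap

lemma mem_homogVanish_iff {Fqm : Type} [Field Fqm] {k d : ℕ} {U : Set (Fin k → Fqm)}
    {p : MvPolynomial (Fin k) Fqm} :
    p ∈ homogVanish Fqm k d U ↔ p.IsHomogeneous d ∧ ∀ u ∈ U, eval u p = 0 := by
  rw [homogVanish, Submodule.mem_inf]
  simp only [Submodule.mem_iInf, LinearMap.mem_ker, AlgHom.toLinearMap_apply,
    mem_homogeneousSubmodule]
  have haev : ∀ (u : Fin k → Fqm) (pp : MvPolynomial (Fin k) Fqm),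
      aeval (R := Fqm) u pp = eval u pp := by
    intro u pp
    rw [aeval_def, Algebra.algebraMap_self, eval]
    rfl
  simp only [haev]

section Aux

variable {Fq Fqm : Type} [Field Fq] [Field Fqm] [Algebra Fq Fqm]

/-- Evaluating a homogeneous polynomial at a scaled point. -/
lemma eval_smul_homog {k i : ℕ} {f : MvPolynomial (Fin k) Fqm}
    (hf : f.IsHomogeneous i) (c : Fqm) (x : Fin k → Fqm) :
    eval (c • x) f = c ^ i * eval x f := by
  rw [eval_eq, eval_eq, Finset.mul_sum]
  refine Finset.sum_congr rfl fun d hd => ?_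
  have hdeg : d.degree = i := by
    have := hf (MvPolynomial.mem_support_iff.mp hd)
    rwa [Finsupp.degree_eq_weight_one]
  have : ∏ j ∈ d.support, (c • x) j ^ d j
      = (∏ j ∈ d.support, c ^ d j) * ∏ j ∈ d.support, x j ^ d j := by
    rw [← Finset.prod_mul_distrib]
    exact Finset.prod_congr rfl fun j _ => by rw [Pi.smul_apply, smul_eq_mul, mul_pow]
  rw [this, Finset.prod_pow_eq_pow_sum]
  have : ∑ j ∈ d.support, d j = i := hdeg
  rw [this]; ring

variable (Fq) in
/-- Nonzero points of `U`. -/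
abbrev Xt {k : ℕ} (U : Submodule Fq (Fin k → Fqm)) : Type :=
  {v : Fin k → Fqm // v ∈ U ∧ v ≠ 0}

/-- Two points are related if they differ by a scalar in `Fq`. -/
instance XtSetoid {k : ℕ} (U : Submodule Fq (Fin k → Fqm)) : Setoid (Xt Fq U) where
  r a b := ∃ c : Fqˣ, (c : Fq) • (b : Fin k → Fqm) = (a : Fin k → Fqm)
  iseqv := by
    constructor
    · intro a; exact ⟨1, by simp⟩
    · rintro a b ⟨c, hc⟩
      exact ⟨c⁻¹, by rw [← hc, smul_smul, ← Units.val_mul, inv_mul_cancel, Units.val_one,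
        one_smul]⟩
    · rintro a b c ⟨u, hu⟩ ⟨v, hv⟩
      exact ⟨u * v, by rw [← hu, ← hv, smul_smul, Units.val_mul]⟩

lemma smul_right_injective_of_ne_zero {k : ℕ} {v : Fin k → Fqm} (hv : v ≠ 0)
    {c c' : Fqˣ} (h : (c : Fq) • v = (c' : Fq) • v) : c = c' := by
  obtain ⟨j, hj⟩ := Function.ne_iff.mp hv
  have hj' : v j ≠ 0 := hj
  have := congrFun h j
  simp only [Pi.smul_apply, Algebra.smul_def] at this
  have h2 : algebraMap Fq Fqm c = algebraMap Fq Fqm c' := mul_right_cancel₀ hj' this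
  exact Units.ext ((algebraMap Fq Fqm).injective h2)

end Aux

theorem statement_11
    (q m k n : ℕ) (hqp : IsPrimePow q) (hm : 0 < m) (hk : 0 < k) (hn : 0 < n)
    (Fq Fqm : Type) [Field Fq] [Fintype Fq] [Field Fqm] [Algebra Fq Fqm]
    (hq : Fintype.card Fq = q) (hdeg : Module.finrank Fq Fqm = m)
    (U : Submodule Fq (Fin k → Fqm))
    (hUdim : Module.finrank Fq U = n)
    (hUspan : Submodule.span Fqm (U : Set (Fin k → Fqm)) = ⊤)
    (i : ℕ) :
    (q - 1) *
        (Nat.choose (k + i - 1) i -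
          Module.finrank Fqm ↥(homogVanish Fqm k i (U : Set (Fin k → Fqm)))) + 1
      ≤ q ^ n := by
  classical
  have hq2 : 2 ≤ q := hqp.two_le
  have hq1 : 1 ≤ q ^ n := Nat.one_le_pow _ _ (by omega)
  -- trivial case `i = 0`
  rcases Nat.eq_zero_or_pos i with hi0 | hipos
  · subst hi0
    have : (k + 0 - 1).choose 0 = 1 := Nat.choose_zero_right _
    rw [this]
    have h1 : (1 - Module.finrank Fqm ↥(homogVanish Fqm k 0 (U : Set (Fin k → Fqm)))) ≤ 1 :=
      Nat.sub_le _ _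
    calc (q - 1) * _ + 1 ≤ (q - 1) * 1 + 1 := by
          exact Nat.add_le_add_right (Nat.mul_le_mul_left _ h1) 1
      _ = q := by omega
      _ ≤ q ^ n := Nat.le_self_pow (by omega) q
  -- main case `0 < i`
  -- `U` is a finite set of cardinality `q ^ n`
  have hfinU : FiniteDimensional Fq U := by
    apply FiniteDimensional.of_finrank_pos; omega
  let bU := Module.finBasis Fq U
  let _ : Fintype U := Module.fintypeOfFintype bU
  have hcardU : Fintype.card U = q ^ n := by
    rw [Module.card_fintype bU, hq, Fintype.card_fin, hUdim]
  -- the type of nonzero points of `U`, and its quotient by scalars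
  let X := Xt Fq U
  have : Fintype X := by
    refine Fintype.ofInjective (fun x : X => (⟨x.1, x.2.1⟩ : U)) ?_
    intro x y h
    have h2 : (⟨x.1, x.2.1⟩ : U) = ⟨y.1, y.2.1⟩ := h
    exact Subtype.ext (congrArg (Subtype.val : U → (Fin k → Fqm)) h2)
  have hcardX : Fintype.card X = q ^ n - 1 := by
    have e : X ≃ {u : U // ¬ u = 0} :=
      { toFun := fun x => ⟨⟨x.1, x.2.1⟩, fun h => x.2.2 (by simpa [Subtype.ext_iff] using h)⟩
        invFun := fun u => ⟨u.1.1, u.1.2, fun h => u.2 (by ext j; simpa using congrFun h j)⟩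
        left_inv := fun x => rfl
        right_inv := fun u => rfl }
    rw [Fintype.card_congr e, Fintype.card_subtype_compl, hcardU,
      Fintype.card_subtype_eq (0 : U)]
  let Q := Quotient (XtSetoid U)
  have : Fintype Q := Quotient.fintype _
  -- counting: (q-1) * card Q ≤ q^n - 1
  have hcount : (q - 1) * Fintype.card Q ≤ q ^ n - 1 := by
    have hinj : Function.Injective
        (fun p : Q × Fqˣ => (⟨(p.2 : Fq) • ((p.1.out : X) : Fin k → Fqm),
          U.smul_mem _ (p.1.out : X).2.1,
          smul_ne_zero (by exact_mod_cast p.2.ne_zero) (p.1.out : X).2.2⟩ : X)) := by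
      rintro ⟨ω, c⟩ ⟨ω', c'⟩ h
      simp only [Subtype.mk.injEq] at h
      have hrel : ω.out ≈ ω'.out := by
        refine ⟨c⁻¹ * c', ?_⟩
        have : ((c : Fq))⁻¹ • ((c : Fq) • ((ω.out : X) : Fin k → Fqm))
            = ((c : Fq))⁻¹ • ((c' : Fq) • ((ω'.out : X) : Fin k → Fqm)) := by rw [h]
        rw [smul_smul, smul_smul, inv_mul_cancel₀ (by exact_mod_cast c.ne_zero), one_smul]
          at this
        rw [this, Units.val_mul, Units.val_inv_eq_inv_val]
      have hω : ω = ω' := by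
        rw [← Quotient.out_eq ω, ← Quotient.out_eq ω']
        exact Quotient.sound hrel
      subst hω
      have hc : c = c' := smul_right_injective_of_ne_zero (ω.out : X).2.2 h
      simp [hc]
    have := Fintype.card_le_of_injective _ hinj
    rw [Fintype.card_prod, Fintype.card_units, hq, hcardX] at this
    calc (q - 1) * Fintype.card Q = Fintype.card Q * (q - 1) := mul_comm _ _
      _ ≤ q ^ n - 1 := this
  -- the homogeneous submodule and its dimension
  set V := homogeneousSubmodule (Fin k) Fqm i with hV
  -- basis of V indexed by degree-i exponent vectors
  let S : Set (Fin k →₀ ℕ) := {d | d.degree = i}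
  have hVS : V = MvPolynomial.restrictSupport Fqm S :=
    homogeneousSubmodule_eq_finsupp_supported (Fin k) Fqm i
  let eS : S ≃ Sym (Fin k) i :=
    { toFun := fun d => ⟨Finsupp.toMultiset d.1, by
        rw [Finsupp.card_toMultiset]
        exact d.2⟩
      invFun := fun s => ⟨Multiset.toFinsupp s.1, by
        have : Finsupp.degree (Multiset.toFinsupp s.1)
            = Multiset.card (Finsupp.toMultiset (Multiset.toFinsupp s.1)) := by
          rw [Finsupp.card_toMultiset]; rfl
        rw [Set.mem_setOf_eq, this, Multiset.toFinsupp_toMultiset, s.2]⟩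
      left_inv := fun d => by
        ext1; exact Finsupp.toMultiset_toFinsupp d.1
      right_inv := fun s => by
        ext1; exact Multiset.toFinsupp_toMultiset s.1 }
  have : Fintype S := Fintype.ofEquiv _ eS.symm
  have hcardS : Fintype.card S = (k + i - 1).choose i := by
    rw [Fintype.card_congr eS, Sym.card_sym_eq_multichoose, Fintype.card_fin,
      Nat.multichoose_eq]
  let bV : Module.Basis S Fqm V := hVS ▸ MvPolynomial.basisRestrictSupport Fqm S
  have hfinV : FiniteDimensional Fqm V := Module.Basis.finiteDimensional_of_finite bV
  have hdimV : Module.finrank Fqm V = (k + i - 1).choose i := by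
    rw [Module.finrank_eq_card_basis bV, hcardS]
  -- the evaluation map at representatives
  let rep : Q → (Fin k → Fqm) := fun ω => ((ω.out : X) : Fin k → Fqm)
  let E : V →ₗ[Fqm] (Q → Fqm) :=
    LinearMap.pi fun ω => ((aeval (R := Fqm) (rep ω)).toLinearMap).comp V.subtype
  -- identify the kernel of E with homogVanish
  set W := homogVanish Fqm k i (U : Set (Fin k → Fqm)) with hW
  have hWV : W ≤ V := inf_le_left
  have haev : ∀ (u : Fin k → Fqm) (p : MvPolynomial (Fin k) Fqm),
      aeval (R := Fqm) u p = eval u p := by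
    intro u p
    rw [aeval_def, Algebra.algebraMap_self, eval]
    rfl
  have hker : LinearMap.ker E = W.comap V.subtype := by
    ext f
    simp only [LinearMap.mem_ker, Submodule.mem_comap, Submodule.subtype_apply]
    rw [hW, mem_homogVanish_iff]
    constructor
    · intro hf
      have hf' : ∀ ω : Q, eval (rep ω) (f : MvPolynomial (Fin k) Fqm) = 0 := by
        intro ω
        have := congrFun hf ω
        simpa [E, haev] using this
      refine ⟨f.2, ?_⟩
      intro u hu
      rcases eq_or_ne u 0 with rfl | hune
      · -- value at zero of a positive-degree homogeneous polynomial
        have hfh : (f : MvPolynomial (Fin k) Fqm).IsHomogeneous i := f.2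
        have h0 : (0 : Fin k → Fqm) = (0 : Fqm) • (0 : Fin k → Fqm) := by simp
        rw [h0, eval_smul_homog hfh, zero_pow (by omega), zero_mul]
      · -- nonzero values are scalar multiples of representatives
        let x : X := ⟨u, hu, hune⟩
        have hrel : ((Quotient.mk (XtSetoid U) x).out) ≈ x :=
          Quotient.exact (Quotient.out_eq _)
        obtain ⟨c, hc⟩ := hrel
        -- hc : (c : Fq) • u = rep ⟦x⟧
        have hc' : u = ((c⁻¹ : Fqˣ) : Fq) • rep (Quotient.mk (XtSetoid U) x) := by
          show u = ((c⁻¹ : Fqˣ) : Fq)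
              • (((Quotient.mk (XtSetoid U) x).out : X) : Fin k → Fqm)
          rw [← hc, smul_smul, ← Units.val_mul, inv_mul_cancel, Units.val_one, one_smul]
        have hfh : (f : MvPolynomial (Fin k) Fqm).IsHomogeneous i := f.2
        rw [hc', ← algebraMap_smul Fqm (((c⁻¹ : Fqˣ) : Fq)) (rep (Quotient.mk (XtSetoid U) x)),
          eval_smul_homog hfh, hf' _, mul_zero]
    · rintro ⟨-, h2⟩
      funext ω
      have hmem := h2 (rep ω) (ω.out : X).2.1
      simpa [E, haev] using hmem
  -- rank-nullity and conclusion
  have hWrank : Module.finrank Fqm (LinearMap.ker E) = Module.finrank Fqm W := by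
    rw [hker]
    exact LinearEquiv.finrank_eq (Submodule.comapSubtypeEquivOfLe hWV)
  have hrn := LinearMap.finrank_range_add_finrank_ker E
  have hrange : Module.finrank Fqm (LinearMap.range E) ≤ Fintype.card Q := by
    have h1 : Module.finrank Fqm (LinearMap.range E) ≤ Module.finrank Fqm (Q → Fqm) :=
      Submodule.finrank_le _
    rwa [Module.finrank_pi] at h1
  rw [hWrank, hdimV] at hrn
  have hsub : (k + i - 1).choose i - Module.finrank Fqm W
      = Module.finrank Fqm (LinearMap.range E) := by omega
  rw [hsub]
  calc (q - 1) * Module.finrank Fqm (LinearMap.range E) + 1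
      ≤ (q - 1) * Fintype.card Q + 1 := by
        exact Nat.add_le_add_right (Nat.mul_le_mul_left _ hrange) 1
    _ ≤ (q ^ n - 1) + 1 := Nat.add_le_add_right hcount 1
    _ = q ^ n := by omega
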